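/- Let A, B > 0 be real numbers with B/A = r/s for some nonzero integers r, s, and let n, m ∈ ℤ be not both zero. Set L = √(n²A² + m²B²), Ξ₀ = (nA/L, mB/L), Ξ₀⊥ = (-mB/L, nA/L), and define F : ℝ² → ℝ² by F(x,y) = x·Ξ₀⊥ + y·Ξ₀. Set a = A·B/L, b = L, and ã = (n²s² + m²r²)·a. Then for every function u : ℝ² → ℂ satisfying u(X + (kA, ℓB)) = u(X) for all k, ℓ ∈ ℤ and all X ∈ ℝ², one has u(F(x + k·ã, y + ℓ·b)) = u(F(x, y)) for all k, ℓ ∈ ℤ and all (x,y) ∈ ℝ². -/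

import Mathlib

open Real AddSubgroup

/-!
Write `Λ = Aℤ × Bℤ`. Since `F` is linear, `F (x + k ã, y + l b) = F (x, y) + k • (ã • Ξ₀⊥) + l • (b • Ξ₀)`,
so `u ∘ F` is `ãℤ × bℤ`-periodic as soon as `ã • Ξ₀⊥` and `b • Ξ₀` lie in `Λ`. Clearly
`b • Ξ₀ = (nA, mB)`, and from `Bs = Ar` and `L² = n²A² + m²B²` one gets
`n²s² + m²r² = s²L²/A²`, whence `ã • Ξ₀⊥ = (-m r² A, n s² B)`.
-/

theorem comp_linear_periodic {M α : Type*} [AddCommGroup M] [Module ℝ M] {Λ : AddSubgroup M}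
    {u : M → α} (hu : ∀ X, ∀ v ∈ Λ, u (X + v) = u X) {F : ℝ × ℝ → M} {v w : M}
    (hF : ∀ x y : ℝ, F (x, y) = x • v + y • w) {a b : ℝ} (ha : a • v ∈ Λ) (hb : b • w ∈ Λ)
    (k l : ℤ) (x y : ℝ) : u (F (x + k * a, y + l * b)) = u (F (x, y)) := by
  have hshift : F (x + k * a, y + l * b) = F (x, y) + (k • a • v + l • b • w) := by
    simp only [hF, add_smul, mul_smul, Int.cast_smul_eq_zsmul]
    abel
  rw [hshift, hu _ _ (add_mem (zsmul_mem ha k) (zsmul_mem hb l))]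

theorem mk_intCast_mul_mem_prod_zmultiples (A B : ℝ) (p q : ℤ) :
    ((p : ℝ) * A, (q : ℝ) * B) ∈ (zmultiples A).prod (zmultiples B) :=
  mem_prod.mpr ⟨intCast_mul_mem_zmultiples A p, intCast_mul_mem_zmultiples B q⟩

theorem map_add_eq_of_mem_prod_zmultiples {α : Type*} {A B : ℝ} {u : ℝ × ℝ → α}
    (hper : ∀ (X : ℝ × ℝ) (k l : ℤ), u (X.1 + k * A, X.2 + l * B) = u X) (X : ℝ × ℝ) :
    ∀ v ∈ (zmultiples A).prod (zmultiples B), u (X + v) = u X := by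
  rintro ⟨v₁, v₂⟩ hv
  obtain ⟨⟨k, rfl⟩, ⟨l, rfl⟩⟩ := mem_prod.mp hv
  simpa [zsmul_eq_mul, Prod.add_def] using hper X k l

theorem sq_mul_sq_add_sq_mul_sq_pos {A B : ℝ} (hA : 0 < A) (hB : 0 < B) {n m : ℤ}
    (hnm : ¬(n = 0 ∧ m = 0)) : 0 < (n : ℝ) ^ 2 * A ^ 2 + (m : ℝ) ^ 2 * B ^ 2 := by
  rcases not_and_or.mp hnm with hn | hm
  · have : (n : ℝ) ≠ 0 := Int.cast_ne_zero.mpr hn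
    positivity
  · have : (m : ℝ) ≠ 0 := Int.cast_ne_zero.mpr hm
    positivity

theorem smul_direction_eq {A B L : ℝ} (hL : L ≠ 0) (n m : ℤ) :
    L • ((n : ℝ) * A / L, (m : ℝ) * B / L) = ((n : ℝ) * A, (m : ℝ) * B) := by
  ext <;> simp only [Prod.smul_fst, Prod.smul_snd, smul_eq_mul] <;> field_simp

theorem smul_perp_eq {A B L : ℝ} {r s n m : ℤ} (hL : L ≠ 0)
    (hLsq : L ^ 2 = (n : ℝ) ^ 2 * A ^ 2 + (m : ℝ) ^ 2 * B ^ 2) (hrs : B * s = A * r) :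
    (((n : ℝ) ^ 2 * (s : ℝ) ^ 2 + (m : ℝ) ^ 2 * (r : ℝ) ^ 2) * (A * B / L)) •
        (-((m : ℝ) * B) / L, (n : ℝ) * A / L) =
      (((-m * r ^ 2 : ℤ) : ℝ) * A, ((n * s ^ 2 : ℤ) : ℝ) * B) := by
  ext <;> simp only [Prod.smul_fst, Prod.smul_snd, smul_eq_mul] <;> push_cast <;> field_simp
  · linear_combination (m * A * r ^ 2 : ℝ) * hLsq - (m * A * n ^ 2 * (s * B + r * A) : ℝ) * hrs
  · linear_combination (-(n * B * s ^ 2) : ℝ) * hLsq - (n * B * m ^ 2 * (s * B + r * A) : ℝ) * hrs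

theorem stmt_5_general (A B : ℝ) (hA : 0 < A) (hB : 0 < B) (r s : ℤ) (hs : s ≠ 0)
    (hBA : B / A = (r : ℝ) / (s : ℝ)) (n m : ℤ) (hnm : ¬(n = 0 ∧ m = 0))
    (L : ℝ) (hL : L = Real.sqrt ((n : ℝ) ^ 2 * A ^ 2 + (m : ℝ) ^ 2 * B ^ 2))
    (Ξ₀ Ξ₀perp : ℝ × ℝ)
    (hΞ₀ : Ξ₀ = ((n : ℝ) * A / L, (m : ℝ) * B / L))
    (hΞ₀perp : Ξ₀perp = (-((m : ℝ) * B) / L, (n : ℝ) * A / L))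
    (F : ℝ × ℝ → ℝ × ℝ) (hF : ∀ x y : ℝ, F (x, y) = x • Ξ₀perp + y • Ξ₀)
    (a b aTilde : ℝ) (ha : a = A * B / L) (hb : b = L)
    (haTilde : aTilde = ((n : ℝ) ^ 2 * (s : ℝ) ^ 2 + (m : ℝ) ^ 2 * (r : ℝ) ^ 2) * a)
    (u : ℝ × ℝ → ℂ)
    (hper : ∀ (X : ℝ × ℝ) (k l : ℤ), u (X.1 + k * A, X.2 + l * B) = u X) :
    ∀ (k l : ℤ) (x y : ℝ),
      u (F (x + k * aTilde, y + l * b)) = u (F (x, y)) := by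
  have hpos := sq_mul_sq_add_sq_mul_sq_pos hA hB hnm
  have hLne : L ≠ 0 := hL ▸ (Real.sqrt_pos.mpr hpos).ne'
  have hLsq : L ^ 2 = (n : ℝ) ^ 2 * A ^ 2 + (m : ℝ) ^ 2 * B ^ 2 := hL ▸ Real.sq_sqrt hpos.le
  have hrs : B * s = A * r := by
    rw [div_eq_div_iff hA.ne' (Int.cast_ne_zero.mpr hs)] at hBA
    linarith
  refine comp_linear_periodic (map_add_eq_of_mem_prod_zmultiples hper) hF ?_ ?_
  · rw [haTilde, ha, hΞ₀perp, smul_perp_eq hLne hLsq hrs]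
    exact mk_intCast_mul_mem_prod_zmultiples A B _ _
  · rw [hb, hΞ₀, smul_direction_eq hLne]
    exact mk_intCast_mul_mem_prod_zmultiples A B n m

/-- Pseudo-periodicity lemma (Lemma 3.1, rational case): when `B/A = r/s` is rational,
the change of coordinates `F` adapted to the direction `Ξ₀ = (nA, mB)/L` transforms a
function periodic with respect to `Aℤ × Bℤ` into a genuinely `aTildeℤ × bℤ`-periodic function,
where `aTilde = (n²s² + m²r²)·AB/L` and `b = L`. -/
theorem stmt_5 (A B : ℝ) (hA : 0 < A) (hB : 0 < B) (r s : ℤ) (hr : r ≠ 0) (hs : s ≠ 0)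
    (hBA : B / A = (r : ℝ) / (s : ℝ)) (n m : ℤ) (hnm : ¬(n = 0 ∧ m = 0))
    (L : ℝ) (hL : L = Real.sqrt ((n : ℝ) ^ 2 * A ^ 2 + (m : ℝ) ^ 2 * B ^ 2))
    (Ξ₀ Ξ₀perp : ℝ × ℝ)
    (hΞ₀ : Ξ₀ = ((n : ℝ) * A / L, (m : ℝ) * B / L))
    (hΞ₀perp : Ξ₀perp = (-((m : ℝ) * B) / L, (n : ℝ) * A / L))
    (F : ℝ × ℝ → ℝ × ℝ) (hF : ∀ x y : ℝ, F (x, y) = x • Ξ₀perp + y • Ξ₀)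
    (a b aTilde : ℝ) (ha : a = A * B / L) (hb : b = L)
    (haTilde : aTilde = ((n : ℝ) ^ 2 * (s : ℝ) ^ 2 + (m : ℝ) ^ 2 * (r : ℝ) ^ 2) * a)
    (u : ℝ × ℝ → ℂ)
    (hper : ∀ (X : ℝ × ℝ) (k l : ℤ), u (X.1 + k * A, X.2 + l * B) = u X) :
    ∀ (k l : ℤ) (x y : ℝ),
      u (F (x + k * aTilde, y + l * b)) = u (F (x, y)) :=
  stmt_5_general A B hA hB r s hs hBA n m hnm L hL Ξ₀ Ξ₀perp hΞ₀ hΞ₀perp F hF a b aTilde ha hb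
    haTilde u hper
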